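/- arXiv:1703.10218 — 2 statements merged into one kernel-verified Lean document; each statement's English description precedes it below -/
import Mathlib

section
/- Suppose ψ⁻ is a backward stationary solution and ψ⁺ is a forward stationary solution such that sup over φ ∈ C(𝕋^d) of ‖K_{−N,0}φ − ψ⁻(·,0)‖_* tends to 0 as N → ∞ and sup over φ ∈ C(𝕋^d) of ‖Ǩ_{0,M}φ − ψ⁺(·,0)‖_* tends to 0 as M → ∞, and suppose the function x ↦ ψ⁻(x,0) − ψ⁺(x,0) attains its minimum at a unique point x₀ ∈ 𝕋^d. Then for every ρ̃ > 0 there exists M₀ ∈ ℕ such that for all integers N, M ≥ M₀, every φ ∈ C(𝕋^d), every x ∈ 𝕋^d, and every minimizer γ for K_{−N,M}φ at x, one has dist(γ(0), x₀) < ρ̃. -/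
open MeasureTheory

noncomputable section

/-- Euclidean space ℝ^d. -/
abbrev V (d : ℕ) := EuclideanSpace ℝ (Fin d)

/-- The torus 𝕋^d = ℝ^d/ℤ^d, as a product of circles, with its quotient distance. -/
abbrev Torus (d : ℕ) := Fin d → AddCircle (1 : ℝ)

/-- The canonical projection ℝ^d → 𝕋^d. -/
def projT {d : ℕ} (x : V d) : Torus d := fun i => (x i : AddCircle (1 : ℝ))

/-- `ζ` is an absolutely continuous curve on `[s,t]` with (square-integrable)
derivative `g`. -/
def IsAC {d : ℕ} (ζ g : ℝ → V d) (s t : ℝ) : Prop :=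
  IntegrableOn g (Set.Icc s t) ∧ IntegrableOn (fun τ => ‖g τ‖ ^ 2) (Set.Icc s t) ∧
    ∀ τ ∈ Set.Icc s t, ζ τ = ζ s + ∫ u in s..τ, g u

/-- The action 𝔸(ζ) = ∫_s^t (½|ζ̇|² − b·ζ̇) dτ − Σ_{s ≤ j < t} F_j(ζ(j)) of the curve `ζ`
with derivative `g`, for the kicked potentials `F`. -/
def action {d : ℕ} (F : ℤ → Torus d → ℝ) (b : V d) (ζ g : ℝ → V d) (s t : ℝ) : ℝ :=
  (∫ τ in s..t, ((1 : ℝ) / 2 * ‖g τ‖ ^ 2 - (inner ℝ b (g τ) : ℝ))) -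
    ∑ j ∈ Finset.Ico ⌈s⌉ ⌈t⌉, F j (projT (ζ (j : ℝ)))

/-- The action function A_{s,t}(x,x') = inf over absolutely continuous curves from
`x` to `x'`. -/
def actFn {d : ℕ} (F : ℤ → Torus d → ℝ) (b : V d) (s t : ℝ) (x x' : Torus d) : ℝ :=
  sInf {a | ∃ ζ g : ℝ → V d, IsAC ζ g s t ∧ projT (ζ s) = x ∧ projT (ζ t) = x' ∧
    action F b ζ g s t = a}

/-- The backward Lax–Oleinik operator K_{s,t}φ(x) = min_y (φ(y) + A_{s,t}(y,x)), with
the convention K_{s,s}φ = φ. -/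
def KOp {d : ℕ} (F : ℤ → Torus d → ℝ) (b : V d) (s t : ℝ) (φ : Torus d → ℝ) :
    Torus d → ℝ :=
  if s < t then fun x => sInf {a | ∃ y : Torus d, a = φ y + actFn F b s t y x} else φ

/-- The forward Lax–Oleinik operator Ǩ_{s,t}φ(x) = max_y (φ(y) − A_{s,t}(x,y)), with
the convention Ǩ_{s,s}φ = φ. -/
def KChk {d : ℕ} (F : ℤ → Torus d → ℝ) (b : V d) (s t : ℝ) (φ : Torus d → ℝ) :
    Torus d → ℝ :=
  if s < t then fun x => sSup {a | ∃ y : Torus d, a = φ y - actFn F b s t x y} else φ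

/-- The seminorm ‖ψ‖_* = min_C sup_x |ψ(x) − C|. -/
def starNorm {d : ℕ} (ψ : Torus d → ℝ) : ℝ := ⨅ C : ℝ, ⨆ x : Torus d, |ψ x - C|

/-- A minimizer for `K_{m,n}φ` at its terminal point `ζ(n)`. -/
def IsMinimizer {d : ℕ} (F : ℤ → Torus d → ℝ) (b : V d) (m n : ℤ) (φ : Torus d → ℝ)
    (ζ g : ℝ → V d) : Prop :=
  IsAC ζ g m n ∧
    KOp F b m n φ (projT (ζ (n : ℝ))) = φ (projT (ζ (m : ℝ))) + action F b ζ g m n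

/-- A curve attaining `Ǩ_{m,n}φ` at its initial point `ζ(m)`. -/
def IsMaximizer {d : ℕ} (F : ℤ → Torus d → ℝ) (b : V d) (m n : ℤ) (φ : Torus d → ℝ)
    (ζ g : ℝ → V d) : Prop :=
  IsAC ζ g m n ∧
    KChk F b m n φ (projT (ζ (m : ℝ))) = φ (projT (ζ (n : ℝ))) - action F b ζ g m n

/-- A backward stationary solution. -/
def IsBackwardSol {d : ℕ} (F : ℤ → Torus d → ℝ) (b : V d) (ψ : Torus d → ℤ → ℝ) : Prop :=
  (∀ n : ℤ, Continuous fun x => ψ x n) ∧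
    ∀ m n : ℤ, m < n → ∀ x, KOp F b m n (fun y => ψ y m) x = ψ x n

/-- A forward stationary solution. -/
def IsForwardSol {d : ℕ} (F : ℤ → Torus d → ℝ) (b : V d) (ψ : Torus d → ℤ → ℝ) : Prop :=
  (∀ n : ℤ, Continuous fun x => ψ x n) ∧
    ∀ m n : ℤ, m < n → ∀ x, KChk F b m n (fun y => ψ y n) x = ψ x m

/-- `ζ` is affine on each interval `[j-1, j]` with (left) velocity `v j`. -/
def AffineOnUnit {d : ℕ} (ζ : ℝ → V d) (v : ℤ → V d) (m n : ℤ) : Prop :=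
  ∀ j : ℤ, m < j → j ≤ n → ∀ τ ∈ Set.Icc ((j : ℝ) - 1) (j : ℝ),
    ζ τ = ζ (j : ℝ) + (τ - (j : ℝ)) • v j

/-!
For a minimizer `γ` for `K_{-N,M}φ`, the point `γ(0)` minimizes
`G(y) = K_{-N,0}φ(y) + A_{0,M}(y, γ(M))`. The action `A_{0,M}(y, ·)` is Lipschitz uniformly in `y`:
on the last unit step, adding a linear drift to an almost minimizer moves its endpoint at a cost
bounded by its kinetic energy. Hence the forward operator maps the continuous function
`-L · dist(·, γ(M))` to `-A_{0,M}(·, γ(M))`, and the two convergence hypotheses say that, up to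
additive constants and an error `ε`, `G` is `ψ⁻(·,0) - ψ⁺(·,0)`. So `G(γ(0)) ≤ G(x₀)` puts the value
of `ψ⁻(·,0) - ψ⁺(·,0)` at `γ(0)` within `4ε` of its minimum, and compactness together with the
uniqueness of the minimum point `x₀` puts `γ(0)` near `x₀`.
-/

open scoped NNReal

theorem Continuous.exists_forall_abs_le {X : Type*} [TopologicalSpace X] [CompactSpace X]
    {f : X → ℝ} (hf : Continuous f) : ∃ B, ∀ x, |f x| ≤ B := by
  obtain ⟨B, hB⟩ := isCompact_univ.exists_bound_of_continuousOn hf.continuousOn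
  exact ⟨B, fun x => by simpa using hB x trivial⟩

theorem exists_pos_add_le_of_forall_ne_lt {X : Type*} [MetricSpace X] [CompactSpace X]
    {h : X → ℝ} (hh : Continuous h) {x₀ : X} (huniq : ∀ x, x ≠ x₀ → h x₀ < h x) {ρ : ℝ}
    (hρ : 0 < ρ) : ∃ δ > 0, ∀ x, ρ ≤ dist x x₀ → h x₀ + δ ≤ h x := by
  rcases {x | ρ ≤ dist x x₀}.eq_empty_or_nonempty with hS | hS
  · exact ⟨1, one_pos, fun x hx => absurd (hS.subset hx) (Set.notMem_empty x)⟩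
  obtain ⟨y, hyS, hy⟩ := (isClosed_le continuous_const
    (continuous_id.dist continuous_const)).isCompact.exists_isMinOn hS hh.continuousOn
  have hy₀ : y ≠ x₀ := by
    rintro rfl
    exact (dist_self y ▸ hyS : ρ ≤ 0).not_gt hρ
  exact ⟨h y - h x₀, sub_pos.2 (huniq y hy₀), fun x hx => by linarith [isMinOn_iff.1 hy x hx]⟩

theorem MeasureTheory.IntegrableOn.intervalIntegrable_of_le {E : Type*} [NormedAddCommGroup E]
    {f : ℝ → E} {s t a c : ℝ} (h : IntegrableOn f (Set.Icc s t)) (hs : s ≤ a) (hac : a ≤ c)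
    (hc : c ≤ t) : IntervalIntegrable f volume a c :=
  (intervalIntegrable_iff_integrableOn_Icc_of_le hac).2 (h.mono_set (Set.Icc_subset_Icc hs hc))

theorem AddCircle.exists_coe_eq_abs_eq_norm {p : ℝ} (a : AddCircle p) :
    ∃ r : ℝ, (r : AddCircle p) = a ∧ |r| = ‖a‖ := by
  obtain ⟨x, rfl⟩ := QuotientAddGroup.mk_surjective a
  refine ⟨x - round (p⁻¹ * x) * p, ?_, (AddCircle.norm_eq p).symm⟩
  rw [eq_comm, QuotientAddGroup.eq_iff_sub_mem]
  exact ⟨round (p⁻¹ * x), by simp⟩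

section Torus

variable {d : ℕ}

theorem projT_add (v w : V d) : projT (v + w) = projT v + projT w := rfl

theorem projT_sub (v w : V d) : projT (v - w) = projT v - projT w := rfl

theorem norm_le_sqrt_mul_of_abs_le {v : V d} {c : ℝ} (hc : 0 ≤ c) (h : ∀ i, |v i| ≤ c) :
    ‖v‖ ≤ √d * c := by
  rw [EuclideanSpace.norm_eq, ← Real.sqrt_sq hc, ← Real.sqrt_mul (Nat.cast_nonneg d)]
  refine Real.sqrt_le_sqrt ?_
  calc ∑ i, ‖v i‖ ^ 2 ≤ ∑ _i : Fin d, c ^ 2 :=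
        Finset.sum_le_sum fun i _ => pow_le_pow_left₀ (norm_nonneg _) (h i) 2
    _ = d * c ^ 2 := by simp

theorem norm_torus_le_half (x : Torus d) : ‖x‖ ≤ 1 / 2 :=
  (pi_norm_le_iff_of_nonneg (by norm_num)).2 fun i =>
    (AddCircle.norm_le_half_period (p := 1) one_ne_zero).trans (by norm_num)

theorem exists_projT_eq_norm_le (x : Torus d) : ∃ v : V d, projT v = x ∧ ‖v‖ ≤ √d * ‖x‖ := by
  choose r hr hnorm using fun i => AddCircle.exists_coe_eq_abs_eq_norm (x i)
  refine ⟨WithLp.toLp 2 r, funext hr, norm_le_sqrt_mul_of_abs_le (norm_nonneg x) fun i => ?_⟩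
  exact (hnorm i).le.trans (norm_le_pi_norm x i)

theorem exists_abs_le_of_continuous_comp_projT {f : Torus d → ℝ}
    (hf : Continuous fun v => f (projT v)) : ∃ B, ∀ x, |f x| ≤ B := by
  obtain ⟨B, hB⟩ := (isCompact_closedBall (0 : V d) √d).exists_bound_of_continuousOn
    hf.continuousOn
  refine ⟨B, fun x => ?_⟩
  obtain ⟨v, rfl, hv⟩ := exists_projT_eq_norm_le x
  refine hB v (mem_closedBall_zero_iff.2 (hv.trans ?_))
  nlinarith [norm_torus_le_half (projT v), norm_nonneg (projT v), Real.sqrt_nonneg d]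

end Torus

section Curves

variable {d : ℕ} {ζ ζ' g g' : ℝ → V d} {s r t τ : ℝ}

theorem IsAC.integrableOn (h : IsAC ζ g s t) : IntegrableOn g (Set.Icc s t) := h.1

theorem IsAC.integrableOn_norm_sq (h : IsAC ζ g s t) :
    IntegrableOn (fun τ => ‖g τ‖ ^ 2) (Set.Icc s t) := h.2.1

theorem IsAC.eq_add_integral (h : IsAC ζ g s t) (hτ : τ ∈ Set.Icc s t) :
    ζ τ = ζ s + ∫ u in s..τ, g u := h.2.2 τ hτ

theorem IsAC.mono {s' t' : ℝ} (h : IsAC ζ g s t) (hs : s ≤ s') (hst : s' ≤ t') (ht : t' ≤ t) :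
    IsAC ζ g s' t' := by
  have hsub := Set.Icc_subset_Icc hs ht
  refine ⟨h.integrableOn.mono_set hsub, h.integrableOn_norm_sq.mono_set hsub, fun τ hτ => ?_⟩
  rw [h.eq_add_integral (hsub hτ), h.eq_add_integral ⟨hs, hst.trans ht⟩, add_assoc,
    intervalIntegral.integral_add_adjacent_intervals
      (h.integrableOn.intervalIntegrable_of_le le_rfl hs (hτ.1.trans (hτ.2.trans ht)))
      (h.integrableOn.intervalIntegrable_of_le hs hτ.1 (hτ.2.trans ht))]

theorem IsAC.trans (h₁ : IsAC ζ g s r) (h₂ : IsAC ζ g r t) (hsr : s ≤ r) (hrt : r ≤ t) :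
    IsAC ζ g s t := by
  have hunion := Set.Icc_union_Icc_eq_Icc hsr hrt
  refine ⟨hunion ▸ h₁.integrableOn.union h₂.integrableOn,
    hunion ▸ h₁.integrableOn_norm_sq.union h₂.integrableOn_norm_sq, fun τ hτ => ?_⟩
  rcases le_total τ r with hτr | hrτ
  · exact h₁.eq_add_integral ⟨hτ.1, hτr⟩
  · rw [h₂.eq_add_integral ⟨hrτ, hτ.2⟩, h₁.eq_add_integral ⟨hsr, le_rfl⟩, add_assoc,
      intervalIntegral.integral_add_adjacent_intervals
        (h₁.integrableOn.intervalIntegrable_of_le le_rfl hsr le_rfl)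
        (h₂.integrableOn.intervalIntegrable_of_le le_rfl hrτ hτ.2)]

theorem IsAC.congr (h : IsAC ζ g s t) (hζ : Set.EqOn ζ ζ' (Set.Icc s t))
    (hg : Set.EqOn g g' (Set.Ioc s t)) : IsAC ζ' g' s t := by
  refine ⟨?_, ?_, fun τ hτ => ?_⟩
  · have hint := h.integrableOn
    rw [integrableOn_Icc_iff_integrableOn_Ioc] at hint ⊢
    exact hint.congr_fun hg measurableSet_Ioc
  · have hint := h.integrableOn_norm_sq
    rw [integrableOn_Icc_iff_integrableOn_Ioc] at hint ⊢
    exact hint.congr_fun (fun τ hτ => by simp only [hg hτ]) measurableSet_Ioc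
  · rw [← hζ hτ, ← hζ ⟨le_rfl, hτ.1.trans hτ.2⟩, h.eq_add_integral hτ]
    congr 1
    refine intervalIntegral.integral_congr_ae (Filter.Eventually.of_forall fun u hu => hg ?_)
    rw [Set.uIoc_of_le hτ.1] at hu
    exact ⟨hu.1, hu.2.trans hτ.2⟩

theorem IsAC.add_const (h : IsAC ζ g s t) (w : V d) : IsAC (fun τ => ζ τ + w) g s t :=
  ⟨h.1, h.2.1, fun τ hτ => by simp only [h.eq_add_integral hτ]; abel⟩

theorem IsAC.add_linear (h : IsAC ζ g s t) (w : V d) :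
    IsAC (fun τ => ζ τ + (τ - s) • w) (fun τ => g τ + w) s t := by
  have hw : IntegrableOn (fun _ => w) (Set.Icc s t) := integrableOn_const measure_Icc_lt_top.ne
  refine ⟨h.integrableOn.add hw, ?_, fun τ hτ => ?_⟩
  · simp_rw [norm_add_sq_real]
    exact (h.integrableOn_norm_sq.add ((h.integrableOn.inner_const w).const_mul 2)).add
      (integrableOn_const measure_Icc_lt_top.ne)
  · rw [intervalIntegral.integral_add (h.integrableOn.intervalIntegrable_of_le le_rfl hτ.1 hτ.2)
      intervalIntegrable_const, intervalIntegral.integral_const]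
    simp only [h.eq_add_integral hτ, sub_self, zero_smul]
    abel

theorem isAC_const (v : V d) : IsAC (fun _ => v) 0 s t :=
  ⟨integrableOn_zero, by simp, fun τ _ => by simp⟩

end Curves

section Action

variable {d : ℕ} {F : ℤ → Torus d → ℝ} {b : V d} {Fb : ℤ → ℝ} {ζ ζ' g g' : ℝ → V d}
  {s r t : ℝ}

theorem IsAC.integrableOn_lagrangian (h : IsAC ζ g s t) (b : V d) :
    IntegrableOn (fun τ => 1 / 2 * ‖g τ‖ ^ 2 - inner ℝ b (g τ)) (Set.Icc s t) :=
  (h.integrableOn_norm_sq.const_mul _).sub (h.integrableOn.const_inner b)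

theorem action_add (h : IsAC ζ g s t) (hsr : s ≤ r) (hrt : r ≤ t) :
    action F b ζ g s t = action F b ζ g s r + action F b ζ g r t := by
  have hL := h.integrableOn_lagrangian b
  simp only [action]
  rw [← intervalIntegral.integral_add_adjacent_intervals
      (hL.intervalIntegrable_of_le le_rfl hsr hrt) (hL.intervalIntegrable_of_le hsr hrt le_rfl),
    ← Finset.Ico_union_Ico_eq_Ico (Int.ceil_mono hsr) (Int.ceil_mono hrt),
    Finset.sum_union (Finset.Ico_disjoint_Ico_consecutive _ _ _)]
  ring

theorem action_congr (hst : s ≤ t) (hζ : Set.EqOn ζ ζ' (Set.Ico s t))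
    (hg : Set.EqOn g g' (Set.Ioc s t)) : action F b ζ g s t = action F b ζ' g' s t := by
  simp only [action]
  congr 1
  · refine intervalIntegral.integral_congr_ae (Filter.Eventually.of_forall fun u hu => ?_)
    rw [Set.uIoc_of_le hst] at hu
    simp only [hg hu]
  · refine Finset.sum_congr rfl fun j hj => ?_
    rw [Finset.mem_Ico, Int.ceil_le, Int.lt_ceil] at hj
    rw [hζ hj]

theorem action_add_const {w : V d} (hw : projT w = 0) :
    action F b (fun τ => ζ τ + w) g s t = action F b ζ g s t := by
  simp only [action, projT_add, hw, add_zero]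

theorem lagrangian_ge (b u : V d) :
    1 / 4 * ‖u‖ ^ 2 - ‖b‖ ^ 2 ≤ 1 / 2 * ‖u‖ ^ 2 - inner ℝ b u := by
  nlinarith [real_inner_le_norm b u, sq_nonneg (‖u‖ - 2 * ‖b‖)]

theorem action_ge (hFb : ∀ j x, |F j x| ≤ Fb j) (h : IsAC ζ g s t) (hst : s ≤ t) :
    1 / 4 * (∫ τ in s..t, ‖g τ‖ ^ 2) - (t - s) * ‖b‖ ^ 2 - ∑ j ∈ Finset.Ico ⌈s⌉ ⌈t⌉, Fb j
      ≤ action F b ζ g s t := by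
  have hg2 := h.integrableOn_norm_sq.intervalIntegrable_of_le le_rfl hst le_rfl
  have hint : ∫ τ in s..t, (1 / 4 * ‖g τ‖ ^ 2 - ‖b‖ ^ 2)
      ≤ ∫ τ in s..t, (1 / 2 * ‖g τ‖ ^ 2 - inner ℝ b (g τ)) :=
    intervalIntegral.integral_mono_on hst ((hg2.const_mul _).sub intervalIntegrable_const)
      ((h.integrableOn_lagrangian b).intervalIntegrable_of_le le_rfl hst le_rfl)
      fun τ _ => lagrangian_ge b (g τ)
  rw [intervalIntegral.integral_sub (hg2.const_mul _) intervalIntegrable_const,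
    intervalIntegral.integral_const_mul, intervalIntegral.integral_const, smul_eq_mul] at hint
  have hkicks : ∑ j ∈ Finset.Ico ⌈s⌉ ⌈t⌉, F j (projT (ζ j)) ≤ ∑ j ∈ Finset.Ico ⌈s⌉ ⌈t⌉, Fb j :=
    Finset.sum_le_sum fun j _ => le_of_abs_le (hFb j _)
  simp only [action]
  linarith

/-- On a unit time step the only kick is at the initial time, where a linear drift vanishes. -/
theorem action_add_linear_le (k : ℤ) (h : IsAC ζ g k (k + 1)) (w : V d) :
    action F b (fun τ => ζ τ + (τ - k) • w) (fun τ => g τ + w) k (k + 1)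
      ≤ action F b ζ g k (k + 1)
        + ‖w‖ * ((1 + ∫ τ in (k : ℝ)..k + 1, ‖g τ‖ ^ 2) / 2 + ‖w‖ / 2 + ‖b‖) := by
  have hk : (k : ℝ) ≤ k + 1 := by linarith
  have hg2 := h.integrableOn_norm_sq.intervalIntegrable_of_le le_rfl hk le_rfl
  have hL := (h.integrableOn_lagrangian b).intervalIntegrable_of_le le_rfl hk le_rfl
  have hL' := ((h.add_linear w).integrableOn_lagrangian b).intervalIntegrable_of_le le_rfl hk le_rfl
  have hpt : ∀ τ, 1 / 2 * ‖g τ + w‖ ^ 2 - inner ℝ b (g τ + w)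
      ≤ (1 / 2 * ‖g τ‖ ^ 2 - inner ℝ b (g τ)) + (‖w‖ / 2 * ‖g τ‖ ^ 2
        + ‖w‖ * (1 / 2 + ‖w‖ / 2 + ‖b‖)) := by
    intro τ
    rw [norm_add_sq_real, inner_add_right]
    nlinarith [real_inner_le_norm (g τ) w, neg_le_abs (inner ℝ b w), abs_real_inner_le_norm b w,
      mul_nonneg (norm_nonneg w) (sq_nonneg (‖g τ‖ - 1))]
  have hint := intervalIntegral.integral_mono_on hk hL'
    (hL.add ((hg2.const_mul _).add intervalIntegrable_const)) fun τ _ => hpt τ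
  rw [intervalIntegral.integral_add hL ((hg2.const_mul _).add intervalIntegrable_const),
    intervalIntegral.integral_add (hg2.const_mul _) intervalIntegrable_const,
    intervalIntegral.integral_const_mul, intervalIntegral.integral_const, smul_eq_mul] at hint
  have hkicks : Finset.Ico ⌈(k : ℝ)⌉ ⌈(k : ℝ) + 1⌉ = {k} := by
    ext j
    rw [Int.ceil_intCast, Int.ceil_add_one, Int.ceil_intCast, Finset.mem_Ico,
      Finset.mem_singleton]
    omega
  simp only [action, hkicks, Finset.sum_singleton, sub_self, zero_smul, add_zero]
  linarith

theorem neg_le_action (hFb : ∀ j x, |F j x| ≤ Fb j) (h : IsAC ζ g s t) (hst : s ≤ t) :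
    -((t - s) * ‖b‖ ^ 2) - ∑ j ∈ Finset.Ico ⌈s⌉ ⌈t⌉, Fb j ≤ action F b ζ g s t := by
  have := intervalIntegral.integral_nonneg (μ := volume) hst fun τ _ => sq_nonneg ‖g τ‖
  linarith [action_ge (b := b) hFb h hst]

variable (b) in
theorem exists_isAC_action_le (hFb : ∀ j x, |F j x| ≤ Fb j) (hst : s < t) (x x' : Torus d) :
    ∃ ζ g : ℝ → V d, IsAC ζ g s t ∧ projT (ζ s) = x ∧ projT (ζ t) = x' ∧
      action F b ζ g s t ≤ d / (t - s) + √d * ‖b‖ + ∑ j ∈ Finset.Ico ⌈s⌉ ⌈t⌉, Fb j := by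
  obtain ⟨v, hv, -⟩ := exists_projT_eq_norm_le x
  obtain ⟨u, hu, hun⟩ := exists_projT_eq_norm_le (x' - x)
  have hδ : 0 < t - s := sub_pos.2 hst
  have hun' : ‖u‖ ≤ √d := by
    nlinarith [norm_torus_le_half (x' - x), norm_nonneg (x' - x), Real.sqrt_nonneg d]
  refine ⟨_, _, (isAC_const v).add_linear ((t - s)⁻¹ • u), by simpa using hv, ?_, ?_⟩
  · simp only [smul_smul, mul_inv_cancel₀ hδ.ne', one_smul, projT_add, hv, hu]
    abel
  · have hkicks : -∑ j ∈ Finset.Ico ⌈s⌉ ⌈t⌉, F j (projT (v + ((j : ℝ) - s) • (t - s)⁻¹ • u))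
        ≤ ∑ j ∈ Finset.Ico ⌈s⌉ ⌈t⌉, Fb j := by
      rw [← Finset.sum_neg_distrib]
      exact Finset.sum_le_sum fun j _ => (neg_le_abs _).trans (hFb j _)
    have hkin : (t - s) * (1 / 2 * ‖(t - s)⁻¹ • u‖ ^ 2 - inner ℝ b ((t - s)⁻¹ • u))
        ≤ d / (t - s) + √d * ‖b‖ := by
      rw [norm_smul, real_inner_smul_right, Real.norm_eq_abs, abs_inv, abs_of_pos hδ]
      have hsq : ‖u‖ ^ 2 ≤ d := by
        nlinarith [Real.sq_sqrt (Nat.cast_nonneg (α := ℝ) d), norm_nonneg u]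
      have hinner : -inner ℝ b u ≤ √d * ‖b‖ := by
        nlinarith [neg_le_abs (inner ℝ b u), abs_real_inner_le_norm b u, norm_nonneg b]
      have hkin' : ‖u‖ ^ 2 / (2 * (t - s)) ≤ d / (t - s) := by
        rw [div_le_div_iff₀ (by positivity) hδ]
        nlinarith [sq_nonneg ‖u‖]
      calc (t - s) * (1 / 2 * ((t - s)⁻¹ * ‖u‖) ^ 2 - (t - s)⁻¹ * inner ℝ b u)
          = ‖u‖ ^ 2 / (2 * (t - s)) - inner ℝ b u := by field_simp
        _ ≤ d / (t - s) + √d * ‖b‖ := by linarith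
    simp only [action, Pi.zero_apply, zero_add, intervalIntegral.integral_const, smul_eq_mul]
    linarith

variable (F b) in
def actionValues (s t : ℝ) (x x' : Torus d) : Set ℝ :=
  {a | ∃ ζ g : ℝ → V d, IsAC ζ g s t ∧ projT (ζ s) = x ∧ projT (ζ t) = x' ∧
    action F b ζ g s t = a}

theorem bddBelow_actionValues (hFb : ∀ j x, |F j x| ≤ Fb j) (hst : s ≤ t) (x x' : Torus d) :
    BddBelow (actionValues F b s t x x') :=
  ⟨_, by rintro _ ⟨ζ, g, h, -, -, rfl⟩; exact neg_le_action hFb h hst⟩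

theorem actFn_le_action (hFb : ∀ j x, |F j x| ≤ Fb j) (hst : s ≤ t) (h : IsAC ζ g s t) :
    actFn F b s t (projT (ζ s)) (projT (ζ t)) ≤ action F b ζ g s t :=
  csInf_le (bddBelow_actionValues hFb hst _ _) ⟨ζ, g, h, rfl, rfl, rfl⟩

theorem le_actFn (hFb : ∀ j x, |F j x| ≤ Fb j) (hst : s < t) (x x' : Torus d) :
    -((t - s) * ‖b‖ ^ 2) - ∑ j ∈ Finset.Ico ⌈s⌉ ⌈t⌉, Fb j ≤ actFn F b s t x x' := by
  obtain ⟨ζ, g, h, hx, hx', -⟩ := exists_isAC_action_le b hFb hst x x'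
  exact le_csInf ⟨_, ζ, g, h, hx, hx', rfl⟩
    (by rintro _ ⟨ζ, g, h, -, -, rfl⟩; exact neg_le_action hFb h hst.le)

theorem actFn_le (hFb : ∀ j x, |F j x| ≤ Fb j) (hst : s < t) (x x' : Torus d) :
    actFn F b s t x x' ≤ d / (t - s) + √d * ‖b‖ + ∑ j ∈ Finset.Ico ⌈s⌉ ⌈t⌉, Fb j := by
  obtain ⟨ζ, g, h, rfl, rfl, hact⟩ := exists_isAC_action_le b hFb hst x x'
  exact (actFn_le_action hFb hst.le h).trans hact

variable (b) in
theorem exists_abs_actFn_le (hFb : ∀ j x, |F j x| ≤ Fb j) (hst : s < t) :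
    ∃ B, ∀ x x', |actFn F b s t x x'| ≤ B := by
  refine ⟨d / (t - s) + √d * ‖b‖ + (t - s) * ‖b‖ ^ 2 + |∑ j ∈ Finset.Ico ⌈s⌉ ⌈t⌉, Fb j|,
    fun x x' => abs_le.2 ⟨?_, ?_⟩⟩
  · have := le_actFn (b := b) hFb hst x x'
    have : 0 ≤ d / (t - s) + √d * ‖b‖ := by have := sub_pos.2 hst; positivity
    linarith [le_abs_self (∑ j ∈ Finset.Ico ⌈s⌉ ⌈t⌉, Fb j)]
  · have := actFn_le (b := b) hFb hst x x'
    linarith [le_abs_self (∑ j ∈ Finset.Ico ⌈s⌉ ⌈t⌉, Fb j), sq_nonneg ‖b‖,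
      mul_nonneg (sub_pos.2 hst).le (sq_nonneg ‖b‖)]

variable (b) in
theorem exists_isAC_action_lt (hFb : ∀ j x, |F j x| ≤ Fb j) (hst : s < t) (x x' : Torus d)
    {η : ℝ} (hη : 0 < η) :
    ∃ ζ g : ℝ → V d, IsAC ζ g s t ∧ projT (ζ s) = x ∧ projT (ζ t) = x' ∧
      action F b ζ g s t < actFn F b s t x x' + η := by
  obtain ⟨ζ, g, h, hx, hx', -⟩ := exists_isAC_action_le b hFb hst x x'
  obtain ⟨_, ⟨ζ, g, h, hx, hx', rfl⟩, hlt⟩ := exists_lt_of_csInf_lt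
    (s := actionValues F b s t x x') ⟨_, ζ, g, h, hx, hx', rfl⟩
    (lt_add_of_pos_right (actFn F b s t x x') hη)
  exact ⟨ζ, g, h, hx, hx', hlt⟩

/-- Concatenate almost minimizing curves, translating the second one by the integer vector
matching its initial point with the endpoint of the first. -/
theorem actFn_le_add (hFb : ∀ j x, |F j x| ≤ Fb j) (hsr : s < r) (hrt : r < t)
    (x y z : Torus d) : actFn F b s t x z ≤ actFn F b s r x y + actFn F b r t y z := by
  refine le_of_forall_pos_le_add fun η hη => ?_
  obtain ⟨ζ₁, g₁, h₁, rfl, hy₁, hact₁⟩ := exists_isAC_action_lt b hFb hsr x y (half_pos hη)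
  obtain ⟨ζ₂, g₂, h₂, hy₂, rfl, hact₂⟩ := exists_isAC_action_lt b hFb hrt y z (half_pos hη)
  set w := ζ₁ r - ζ₂ r
  have hw : projT w = 0 := by rw [projT_sub, hy₁, hy₂, sub_self]
  set ζ : ℝ → V d := fun τ => if τ ≤ r then ζ₁ τ else ζ₂ τ + w
  set g : ℝ → V d := fun τ => if τ ≤ r then g₁ τ else g₂ τ
  have hζ₁ : Set.EqOn ζ₁ ζ (Set.Icc s r) := fun τ hτ => (if_pos hτ.2).symm
  have hg₁ : Set.EqOn g₁ g (Set.Ioc s r) := fun τ hτ => (if_pos hτ.2).symm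
  have hζ₂ : Set.EqOn (fun τ => ζ₂ τ + w) ζ (Set.Icc r t) := by
    intro τ hτ
    rcases hτ.1.eq_or_lt with rfl | hrτ
    · simp [ζ, w]
    · exact (if_neg hrτ.not_ge).symm
  have hg₂ : Set.EqOn g₂ g (Set.Ioc r t) := fun τ hτ => (if_neg hτ.1.not_ge).symm
  have h : IsAC ζ g s t := (h₁.congr hζ₁ hg₁).trans ((h₂.add_const w).congr hζ₂ hg₂) hsr.le hrt.le
  have hs : ζ s = ζ₁ s := if_pos hsr.le
  have ht : projT (ζ t) = projT (ζ₂ t) := by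
    rw [← hζ₂ ⟨hrt.le, le_rfl⟩, projT_add, hw, add_zero]
  calc actFn F b s t (projT (ζ₁ s)) (projT (ζ₂ t))
      ≤ action F b ζ g s t := hs ▸ ht ▸ actFn_le_action hFb (hsr.trans hrt).le h
    _ = action F b ζ₁ g₁ s r + action F b ζ₂ g₂ r t := by
      rw [action_add h hsr.le hrt.le, action_congr hsr.le (hζ₁.mono Set.Ico_subset_Icc_self).symm
        hg₁.symm, action_congr hrt.le (hζ₂.mono Set.Ico_subset_Icc_self).symm hg₂.symm,
        action_add_const hw]
    _ ≤ _ := by linarith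

variable (b) in
theorem exists_actFn_add_actFn_le (hFb : ∀ j x, |F j x| ≤ Fb j) (hsr : s < r) (hrt : r < t)
    (x z : Torus d) {η : ℝ} (hη : 0 < η) :
    ∃ y, actFn F b s r x y + actFn F b r t y z ≤ actFn F b s t x z + η := by
  obtain ⟨ζ, g, h, rfl, rfl, hact⟩ := exists_isAC_action_lt b hFb (hsr.trans hrt) x z hη
  refine ⟨projT (ζ r), ?_⟩
  have h₁ := actFn_le_action (b := b) hFb hsr.le (h.mono le_rfl hsr.le hrt.le)
  have h₂ := actFn_le_action (b := b) hFb hrt.le (h.mono hsr.le hrt.le le_rfl)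
  rw [action_add h hsr.le hrt.le] at hact
  linarith

variable (b) in
theorem exists_lipschitzWith_actFn_unit (hFb : ∀ j x, |F j x| ≤ Fb j) (k : ℤ) :
    ∃ L : ℝ≥0, ∀ p, LipschitzWith L (actFn F b k (k + 1) p) := by
  have hk : (k : ℝ) < k + 1 := lt_add_one _
  set kick := ∑ j ∈ Finset.Ico ⌈(k : ℝ)⌉ ⌈(k : ℝ) + 1⌉, Fb j
  set E := 4 * (d + √d * ‖b‖ + 1 + ‖b‖ ^ 2 + 2 * kick)
  set L := √d * ((1 + E) / 2 + √d / 4 + ‖b‖)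
  refine ⟨L.toNNReal, fun p => LipschitzWith.of_le_add_mul' L fun z z' => ?_⟩
  refine le_of_forall_pos_le_add fun η hη => ?_
  obtain ⟨ζ, g, h, rfl, rfl, hact⟩ := exists_isAC_action_lt b hFb hk p z' (lt_min hη one_pos)
  have hup := actFn_le (b := b) hFb hk (projT (ζ k)) (projT (ζ (k + 1)))
  have hlow := action_ge (b := b) hFb h hk.le
  have hE0 := intervalIntegral.integral_nonneg (μ := volume) hk.le fun τ _ => sq_nonneg ‖g τ‖
  have hE : ∫ τ in (k : ℝ)..k + 1, ‖g τ‖ ^ 2 ≤ E := by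
    simp only [add_sub_cancel_left, div_one, one_mul] at hup hlow
    linarith [min_le_right η 1]
  obtain ⟨w, hw, hwn⟩ := exists_projT_eq_norm_le (z - projT (ζ (k + 1)))
  have hwd : ‖w‖ ≤ √d * dist z (projT (ζ (k + 1))) := by rwa [dist_eq_norm]
  have hw2 : ‖w‖ ≤ √d / 2 := hwn.trans (by
    nlinarith [norm_torus_le_half (z - projT (ζ (k + 1))), Real.sqrt_nonneg d])
  have hend : projT (ζ (k + 1) + ((k : ℝ) + 1 - k) • w) = z := by
    rw [add_sub_cancel_left, one_smul, projT_add, hw, add_sub_cancel]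
  have hcost : ‖w‖ * ((1 + ∫ τ in (k : ℝ)..k + 1, ‖g τ‖ ^ 2) / 2 + ‖w‖ / 2 + ‖b‖)
      ≤ L * dist z (projT (ζ (k + 1))) :=
    calc _ ≤ ‖w‖ * ((1 + E) / 2 + √d / 4 + ‖b‖) :=
          mul_le_mul_of_nonneg_left (by linarith) (norm_nonneg w)
      _ ≤ (√d * dist z (projT (ζ (k + 1)))) * ((1 + E) / 2 + √d / 4 + ‖b‖) :=
          mul_le_mul_of_nonneg_right hwd (by linarith [Real.sqrt_nonneg d, norm_nonneg b])
      _ = L * dist z (projT (ζ (k + 1))) := by ring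
  calc actFn F b k (k + 1) (projT (ζ k)) z
      ≤ action F b (fun τ => ζ τ + (τ - k) • w) (fun τ => g τ + w) k (k + 1) := by
        simpa only [sub_self, zero_smul, add_zero, hend] using
          actFn_le_action hFb hk.le (h.add_linear w)
    _ ≤ action F b ζ g k (k + 1)
        + ‖w‖ * ((1 + ∫ τ in (k : ℝ)..k + 1, ‖g τ‖ ^ 2) / 2 + ‖w‖ / 2 + ‖b‖) :=
        action_add_linear_le k h w
    _ ≤ _ := by linarith [min_le_left η 1]

variable (b) in
theorem exists_lipschitzWith_actFn (hFb : ∀ j x, |F j x| ≤ Fb j) {m n : ℤ} (hmn : m < n) :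
    ∃ L : ℝ≥0, ∀ y, LipschitzWith L (actFn F b m n y) := by
  obtain ⟨L, hL⟩ := exists_lipschitzWith_actFn_unit b hFb (n - 1)
  push_cast at hL
  rw [sub_add_cancel] at hL
  rcases (Int.add_one_le_of_lt hmn).eq_or_lt with rfl | hlt
  · exact ⟨L, by simpa using hL⟩
  refine ⟨L, fun y => LipschitzWith.of_le_add_mul L fun z z' => ?_⟩
  refine le_of_forall_pos_le_add fun η hη => ?_
  have hsr : (m : ℝ) < n - 1 := by
    rw [← Int.cast_one, ← Int.cast_sub, Int.cast_lt]; omega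
  have hrt : (n : ℝ) - 1 < n := sub_one_lt _
  obtain ⟨p, hp⟩ := exists_actFn_add_actFn_le b hFb hsr hrt y z' hη
  calc actFn F b m n y z ≤ actFn F b m (n - 1) y p + actFn F b (n - 1) n p z :=
        actFn_le_add hFb hsr hrt y p z
    _ ≤ actFn F b m (n - 1) y p + (actFn F b (n - 1) n p z' + L * dist z z') :=
        by gcongr; exact (hL p).le_add_mul z z'
    _ ≤ _ := by linarith

end Action

section LaxOleinik

variable {d : ℕ} {F : ℤ → Torus d → ℝ} {b : V d} {Fb : ℤ → ℝ} {φ : Torus d → ℝ}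
  {ζ g : ℝ → V d} {s r t : ℝ}

theorem KOp_eq_iInf (hst : s < t) (φ : Torus d → ℝ) (x : Torus d) :
    KOp F b s t φ x = ⨅ y, φ y + actFn F b s t y x := by
  simp only [KOp, if_pos hst, iInf, Set.range, eq_comm]

theorem KChk_eq_iSup (hst : s < t) (φ : Torus d → ℝ) (x : Torus d) :
    KChk F b s t φ x = ⨆ y, φ y - actFn F b s t x y := by
  simp only [KChk, if_pos hst, iSup, Set.range, eq_comm]

theorem bddBelow_range_add_actFn (hFb : ∀ j x, |F j x| ≤ Fb j) (hst : s < t)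
    (hφ : BddBelow (Set.range φ)) (x : Torus d) :
    BddBelow (Set.range fun y => φ y + actFn F b s t y x) := by
  obtain ⟨c, hc⟩ := hφ
  exact ⟨_, by rintro _ ⟨y, rfl⟩; exact add_le_add (hc ⟨y, rfl⟩) (le_actFn hFb hst y x)⟩

theorem KOp_le (hFb : ∀ j x, |F j x| ≤ Fb j) (hst : s < t) (hφ : BddBelow (Set.range φ))
    (x y : Torus d) : KOp F b s t φ x ≤ φ y + actFn F b s t y x := by
  rw [KOp_eq_iInf hst]
  exact ciInf_le (bddBelow_range_add_actFn hFb hst hφ x) y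

theorem KOp_le_KOp_add_actFn (hFb : ∀ j x, |F j x| ≤ Fb j) (hφ : BddBelow (Set.range φ))
    (hsr : s < r) (hrt : r < t) (x y : Torus d) :
    KOp F b s t φ x ≤ KOp F b s r φ y + actFn F b r t y x := by
  refine le_of_forall_pos_le_add fun η hη => ?_
  obtain ⟨y', hy'⟩ := exists_lt_of_ciInf_lt
    (lt_add_of_pos_right (⨅ y', φ y' + actFn F b s r y' y) hη)
  rw [← KOp_eq_iInf hsr] at hy'
  calc KOp F b s t φ x ≤ φ y' + actFn F b s t y' x := KOp_le hFb (hsr.trans hrt) hφ x y'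
    _ ≤ φ y' + (actFn F b s r y' y + actFn F b r t y x) := by
      gcongr; exact actFn_le_add hFb hsr hrt y' y x
    _ ≤ _ := by linarith

theorem exists_abs_KOp_le (hFb : ∀ j x, |F j x| ≤ Fb j) (hst : s < t)
    (hφ : ∃ B, ∀ y, |φ y| ≤ B) : ∃ B, ∀ x, |KOp F b s t φ x| ≤ B := by
  obtain ⟨Bφ, hBφ⟩ := hφ
  obtain ⟨BA, hBA⟩ := exists_abs_actFn_le b hFb hst
  have hφ' : BddBelow (Set.range φ) :=
    ⟨-Bφ, by rintro _ ⟨y, rfl⟩; exact (abs_le.1 (hBφ y)).1⟩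
  refine ⟨Bφ + BA, fun x => abs_le.2 ⟨?_, ?_⟩⟩
  · rw [KOp_eq_iInf hst]
    exact le_ciInf fun y => by linarith [abs_le.1 (hBφ y), abs_le.1 (hBA y x)]
  · linarith [KOp_le (b := b) hFb hst hφ' x 0, abs_le.1 (hBφ 0), abs_le.1 (hBA 0 x)]

theorem IsMinimizer.KOp_add_actFn_le (hFb : ∀ j x, |F j x| ≤ Fb j)
    (hφ : BddBelow (Set.range φ)) {m n : ℤ} (h : IsMinimizer F b m n φ ζ g) (hmr : (m : ℝ) < r)
    (hrn : r < n) (y : Torus d) :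
    KOp F b m r φ (projT (ζ r)) + actFn F b r n (projT (ζ r)) (projT (ζ n))
      ≤ KOp F b m r φ y + actFn F b r n y (projT (ζ n)) := by
  obtain ⟨hζ, hmin⟩ := h
  calc _ ≤ (φ (projT (ζ m)) + action F b ζ g m r) + action F b ζ g r n := by
        gcongr
        · exact (KOp_le hFb hmr hφ _ _).trans
            (by gcongr; exact actFn_le_action hFb hmr.le (hζ.mono le_rfl hmr.le hrn.le))
        · exact actFn_le_action hFb hrn.le (hζ.mono hmr.le hrn.le le_rfl)
    _ = KOp F b m n φ (projT (ζ n)) := by rw [hmin, action_add hζ hmr.le hrn.le, add_assoc]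
    _ ≤ _ := KOp_le_KOp_add_actFn hFb hφ hmr hrn _ _

theorem KChk_neg_mul_dist (hst : s < t) {L : ℝ≥0} (hL : ∀ y, LipschitzWith L (actFn F b s t y))
    (z y : Torus d) : KChk F b s t (fun u => -(L * dist u z)) y = -actFn F b s t y z := by
  have hle : ∀ u, -(L * dist u z) - actFn F b s t y u ≤ -actFn F b s t y z := fun u => by
    linarith [dist_comm z u ▸ (hL y).le_add_mul z u]
  rw [KChk_eq_iSup hst]
  exact le_antisymm (ciSup_le hle)
    (by simpa using le_ciSup ⟨_, Set.forall_mem_range.2 hle⟩ z)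

end LaxOleinik

theorem exists_forall_abs_sub_le_of_starNorm_lt {d : ℕ} {f : Torus d → ℝ} {ε : ℝ}
    (hf : ∃ B, ∀ x, |f x| ≤ B) (h : starNorm f < ε) : ∃ C, ∀ x, |f x - C| ≤ ε := by
  obtain ⟨B, hB⟩ := hf
  obtain ⟨C, hC⟩ := exists_lt_of_ciInf_lt h
  refine ⟨C, fun x => (le_ciSup ⟨B + |C|, ?_⟩ x).trans hC.le⟩
  rintro _ ⟨y, rfl⟩
  exact (abs_sub _ _).trans (by linarith [hB y])

theorem statement3_general {d : ℕ} (F : ℤ → Torus d → ℝ)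
    (hF : ∀ j : ℤ, ContDiff ℝ 2 fun x : V d => F j (projT x)) (b : V d)
    (ψm ψp : Torus d → ℤ → ℝ)
    (hψm : IsBackwardSol F b ψm) (hψp : IsForwardSol F b ψp)
    -- sup_φ ‖K_{−N,0}φ − ψ⁻(·,0)‖_* → 0 as N → ∞:
    (hconvm : ∀ ε : ℝ, 0 < ε → ∃ N₁ : ℕ, ∀ N : ℕ, N₁ ≤ N → ∀ φ : Torus d → ℝ,
      Continuous φ → starNorm (fun x => KOp F b (-(N : ℝ)) 0 φ x - ψm x 0) < ε)
    -- sup_φ ‖Ǩ_{0,M}φ − ψ⁺(·,0)‖_* → 0 as M → ∞: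
    (hconvp : ∀ ε : ℝ, 0 < ε → ∃ M₁ : ℕ, ∀ M : ℕ, M₁ ≤ M → ∀ φ : Torus d → ℝ,
      Continuous φ → starNorm (fun x => KChk F b 0 (M : ℝ) φ x - ψp x 0) < ε)
    -- x₀ is the unique minimum point of ψ⁻(·,0) − ψ⁺(·,0):
    (x₀ : Torus d)
    (huniq : ∀ x : Torus d, x ≠ x₀ → ψm x₀ 0 - ψp x₀ 0 < ψm x 0 - ψp x 0)
    (ρ' : ℝ) (hρ' : 0 < ρ') :
    ∃ M₀ : ℕ, ∀ N M : ℕ, M₀ ≤ N → M₀ ≤ M → ∀ φ : Torus d → ℝ, Continuous φ →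
      ∀ ζ g : ℝ → V d, IsMinimizer F b (-(N : ℤ)) (M : ℤ) φ ζ g →
        dist (projT (ζ 0)) x₀ < ρ' := by
  obtain ⟨δ, hδ, hgap⟩ := exists_pos_add_le_of_forall_ne_lt
    (h := fun x => ψm x 0 - ψp x 0) ((hψm.1 0).sub (hψp.1 0)) huniq hρ'
  choose Fb hFb using fun j => exists_abs_le_of_continuous_comp_projT (hF j).continuous
  obtain ⟨Bm, hBm⟩ := (hψm.1 0).exists_forall_abs_le
  obtain ⟨Bp, hBp⟩ := (hψp.1 0).exists_forall_abs_le
  obtain ⟨N₁, hN₁⟩ := hconvm (δ / 5) (by positivity)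
  obtain ⟨M₁, hM₁⟩ := hconvp (δ / 5) (by positivity)
  refine ⟨max (max N₁ M₁) 1, fun N M hN hM φ hφ ζ g hζ => ?_⟩
  simp only [max_le_iff] at hN hM
  have hN0 : -(N : ℝ) < 0 := by simp only [Left.neg_neg_iff, Nat.cast_pos]; omega
  have hM0 : (0 : ℝ) < M := by simp only [Nat.cast_pos]; omega
  obtain ⟨BK, hBK⟩ := exists_abs_KOp_le (b := b) hFb hN0 hφ.exists_forall_abs_le
  obtain ⟨BA, hBA⟩ := exists_abs_actFn_le b hFb hM0
  obtain ⟨C, hC⟩ := exists_forall_abs_sub_le_of_starNorm_lt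
    ⟨BK + Bm, fun x => (abs_sub _ _).trans (add_le_add (hBK x) (hBm x))⟩ (hN₁ N hN.1.1 φ hφ)
  obtain ⟨L, hL⟩ := exists_lipschitzWith_actFn b hFb (m := 0) (n := M) (by omega)
  push_cast at hL
  have hback := hM₁ M hM.1.2 (fun u => -(L * dist u (projT (ζ M)))) (by fun_prop)
  simp only [KChk_neg_mul_dist hM0 hL] at hback
  obtain ⟨C', hC'⟩ := exists_forall_abs_sub_le_of_starNorm_lt
    ⟨BA + Bp, fun x => (abs_sub _ _).trans
      (add_le_add (by simpa using hBA x (projT (ζ M))) (hBp x))⟩ hback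
  have hmin := hζ.KOp_add_actFn_le hFb (isCompact_range hφ).bddBelow (r := 0)
    (by push_cast; exact hN0) (by push_cast; exact hM0) x₀
  push_cast at hmin
  by_contra hfar
  have := hgap _ (not_lt.1 hfar)
  linarith [abs_le.1 (hC (projT (ζ 0))), abs_le.1 (hC x₀), abs_le.1 (hC' (projT (ζ 0))),
    abs_le.1 (hC' x₀)]

theorem statement3 {d : ℕ} (F : ℤ → Torus d → ℝ)
    (hF : ∀ j : ℤ, ContDiff ℝ 2 fun x : V d => F j (projT x)) (b : V d)
    (ψm ψp : Torus d → ℤ → ℝ)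
    (hψm : IsBackwardSol F b ψm) (hψp : IsForwardSol F b ψp)
    -- sup_φ ‖K_{−N,0}φ − ψ⁻(·,0)‖_* → 0 as N → ∞:
    (hconvm : ∀ ε : ℝ, 0 < ε → ∃ N₁ : ℕ, ∀ N : ℕ, N₁ ≤ N → ∀ φ : Torus d → ℝ,
      Continuous φ → starNorm (fun x => KOp F b (-(N : ℝ)) 0 φ x - ψm x 0) < ε)
    -- sup_φ ‖Ǩ_{0,M}φ − ψ⁺(·,0)‖_* → 0 as M → ∞:
    (hconvp : ∀ ε : ℝ, 0 < ε → ∃ M₁ : ℕ, ∀ M : ℕ, M₁ ≤ M → ∀ φ : Torus d → ℝ,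
      Continuous φ → starNorm (fun x => KChk F b 0 (M : ℝ) φ x - ψp x 0) < ε)
    -- x₀ is the unique minimum point of ψ⁻(·,0) − ψ⁺(·,0):
    (x₀ : Torus d)
    (hmin : ∀ x : Torus d, ψm x₀ 0 - ψp x₀ 0 ≤ ψm x 0 - ψp x 0)
    (huniq : ∀ x : Torus d, x ≠ x₀ → ψm x₀ 0 - ψp x₀ 0 < ψm x 0 - ψp x 0)
    (ρ' : ℝ) (hρ' : 0 < ρ') :
    ∃ M₀ : ℕ, ∀ N M : ℕ, M₀ ≤ N → M₀ ≤ M → ∀ φ : Torus d → ℝ, Continuous φ →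
      ∀ ζ g : ℝ → V d, IsMinimizer F b (-(N : ℤ)) (M : ℤ) φ ζ g →
        dist (projT (ζ 0)) x₀ < ρ' :=
  statement3_general F hF b ψm ψp hψm hψp hconvm hconvp x₀ huniq ρ' hρ'
end
end

section
/- Let (Ω, ℱ, P) be a probability space, let θ : Ω → Ω be an invertible ergodic measure-preserving transformation, and let E ∈ ℱ satisfy P(E) > 1 − α for some α ∈ (0, 1). Then for every β with α < β < 1, for P-almost every ω there exists N₀(ω) such that for every integer N ≥ N₀(ω), every set of at least βN consecutive integers contained in [−N, 0] contains an integer n with θ^n ω ∈ E. -/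
/-!
Put `T = θ⁻¹`, so that the number of misses `#{k < n | θ⁻ᵏ ω ∉ E}` is the Birkhoff sum `Sₙ` of
`g = 1_{Eᶜ}` along `T`. For `∫ g < r < q`, the set where `limsup Sₙ / n ≥ q` is `T`-invariant,
hence null or conull by ergodicity; were it conull, the maximal ergodic theorem for `g - r` would
give `∫ g ≥ r`. Hence almost surely `Sₙ < α n` for large `n`, since `∫ g = P(Eᶜ) < α`, and then
`S_{N+1} < β N` for large `N`. A block of at least `β N` consecutive times in `[-N, 0]` avoiding
`E` would contribute at least `β N` misses to `S_{N+1}`.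
-/

open MeasureTheory Filter Finset

section BirkhoffMax

variable {α : Type*} {T : α → α} {f : α → ℝ}

-- `birkhoffMax T f N = max (0, S₁ f, …, S_N f)`, where `Sₙ f = birkhoffSum T f n`.
noncomputable def birkhoffMax (T : α → α) (f : α → ℝ) : ℕ → α → ℝ
  | 0 => 0
  | N + 1 => fun x => max 0 (f x + birkhoffMax T f N (T x))

theorem birkhoffMax_nonneg : ∀ N x, 0 ≤ birkhoffMax T f N x
  | 0, _ => le_rfl
  | _ + 1, _ => le_max_left _ _

theorem birkhoffMax_le_succ : ∀ N x, birkhoffMax T f N x ≤ birkhoffMax T f (N + 1) x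
  | 0, x => birkhoffMax_nonneg 1 x
  | N + 1, x => max_le_max le_rfl (add_le_add le_rfl (birkhoffMax_le_succ N (T x)))

theorem birkhoffSum_le_birkhoffMax : ∀ {n N : ℕ} (x : α), n ≤ N →
    birkhoffSum T f n x ≤ birkhoffMax T f N x
  | 0, N, x, _ => by rw [birkhoffSum_zero]; exact birkhoffMax_nonneg N x
  | n + 1, N + 1, x, h => by
    rw [birkhoffSum_succ']
    exact (add_le_add le_rfl (birkhoffSum_le_birkhoffMax (T x) (by omega))).trans
      (le_max_right _ _)

theorem exists_birkhoffSum_eq_birkhoffMax :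
    ∀ (N : ℕ) (x : α), ∃ n ≤ N, birkhoffSum T f n x = birkhoffMax T f N x
  | 0, _ => ⟨0, le_rfl, rfl⟩
  | N + 1, x => by
    rcases max_choice 0 (f x + birkhoffMax T f N (T x)) with h | h
    · exact ⟨0, N.zero_le.trans N.le_succ, by simp only [birkhoffMax, h, birkhoffSum_zero]⟩
    · obtain ⟨n, hn, hS⟩ := exists_birkhoffSum_eq_birkhoffMax N (T x)
      exact ⟨n + 1, by omega, by simp only [birkhoffMax, h, birkhoffSum_succ', hS]⟩

theorem birkhoffMax_le_birkhoffSum_abs :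
    ∀ N x, birkhoffMax T f N x ≤ birkhoffSum T (fun y => |f y|) N x
  | 0, _ => le_of_eq (birkhoffSum_zero _ _ _).symm
  | N + 1, x => by
    have ih := birkhoffMax_le_birkhoffSum_abs N (T x)
    rw [birkhoffSum_succ']
    exact max_le (add_nonneg (abs_nonneg _) ((birkhoffMax_nonneg N (T x)).trans ih))
      (add_le_add (le_abs_self _) ih)

theorem birkhoffMax_succ_sub_le_indicator (N : ℕ) (x : α) :
    birkhoffMax T f (N + 1) x - birkhoffMax T f N (T x) ≤
      {y | 0 < birkhoffMax T f (N + 1) y}.indicator f x := by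
  simp only [Set.indicator_apply, Set.mem_ofPred_eq]
  split_ifs with hx
  · have : birkhoffMax T f (N + 1) x = f x + birkhoffMax T f N (T x) :=
      (max_choice _ _).resolve_left hx.ne'
    linarith
  · linarith [birkhoffMax_nonneg (T := T) (f := f) N (T x)]

variable [MeasurableSpace α] {μ : Measure α}

theorem measurable_birkhoffMax (hT : Measurable T) (hf : Measurable f) :
    ∀ N, Measurable (birkhoffMax T f N)
  | 0 => measurable_const
  | N + 1 => measurable_const.max (hf.add ((measurable_birkhoffMax hT hf N).comp hT))

theorem measurable_birkhoffSum {E : Type*} [AddCommMonoid E] [MeasurableSpace E]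
    [MeasurableAdd₂ E] {g : α → E} (hT : Measurable T) (hg : Measurable g) (n : ℕ) :
    Measurable (birkhoffSum T g n) :=
  Finset.measurable_sum _ fun k _ => hg.comp (hT.iterate k)

namespace MeasureTheory.MeasurePreserving

theorem integrable_birkhoffSum {E : Type*} [NormedAddCommGroup E]
    {g : α → E} (hT : MeasurePreserving T μ μ) (hg : Integrable g μ) (n : ℕ) :
    Integrable (birkhoffSum T g n) μ :=
  integrable_finsetSum _ fun k _ => (hT.iterate k).integrable_comp_of_integrable hg

theorem integrable_birkhoffMax (hT : MeasurePreserving T μ μ)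
    (hfm : Measurable f) (hf : Integrable f μ) (N : ℕ) : Integrable (birkhoffMax T f N) μ :=
  (hT.integrable_birkhoffSum hf.abs N).mono'
    (measurable_birkhoffMax hT.measurable hfm N).aestronglyMeasurable
    (ae_of_all _ fun x => by
      rw [Real.norm_of_nonneg (birkhoffMax_nonneg N x)]
      exact birkhoffMax_le_birkhoffSum_abs N x)

theorem integral_comp_of_aestronglyMeasurable {E : Type*} [NormedAddCommGroup E]
    [NormedSpace ℝ E] {g : α → E} (hT : MeasurePreserving T μ μ) (hg : AEStronglyMeasurable g μ) :
    ∫ x, g (T x) ∂μ = ∫ x, g x ∂μ := by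
  rw [← integral_map hT.measurable.aemeasurable (hT.map_eq.symm ▸ hg), hT.map_eq]

theorem setIntegral_birkhoffMax_pos_nonneg (hT : MeasurePreserving T μ μ)
    (hfm : Measurable f) (hf : Integrable f μ) :
    ∀ N, 0 ≤ ∫ x in {x | 0 < birkhoffMax T f N x}, f x ∂μ
  | 0 => by simp [birkhoffMax]
  | N + 1 => by
    have hM := hT.integrable_birkhoffMax hfm hf
    have hMT : Integrable (fun x => birkhoffMax T f N (T x)) μ :=
      hT.integrable_comp_of_integrable (hM N)
    have hG : MeasurableSet {x | 0 < birkhoffMax T f (N + 1) x} :=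
      measurableSet_lt measurable_const (measurable_birkhoffMax hT.measurable hfm _)
    calc 0 ≤ ∫ x, birkhoffMax T f (N + 1) x ∂μ - ∫ x, birkhoffMax T f N x ∂μ :=
          sub_nonneg.2 (integral_mono (hM N) (hM _) (birkhoffMax_le_succ N))
      _ = ∫ x, (birkhoffMax T f (N + 1) x - birkhoffMax T f N (T x)) ∂μ := by
          rw [integral_sub (hM _) hMT,
            hT.integral_comp_of_aestronglyMeasurable (hM N).aestronglyMeasurable]
      _ ≤ ∫ x, {y | 0 < birkhoffMax T f (N + 1) y}.indicator f x ∂μ :=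
          integral_mono ((hM _).sub hMT) (hf.indicator hG) (birkhoffMax_succ_sub_le_indicator N)
      _ = _ := integral_indicator hG

theorem setIntegral_setOf_exists_birkhoffSum_pos_nonneg
    (hT : MeasurePreserving T μ μ) (hfm : Measurable f) (hf : Integrable f μ) :
    0 ≤ ∫ x in {x | ∃ n, 0 < birkhoffSum T f n x}, f x ∂μ := by
  have hU : {x | ∃ n, 0 < birkhoffSum T f n x} = ⋃ N, {x | 0 < birkhoffMax T f N x} := by
    ext x
    simp only [Set.mem_ofPred_eq, Set.mem_iUnion]
    constructor
    · rintro ⟨n, hn⟩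
      exact ⟨n, hn.trans_le (birkhoffSum_le_birkhoffMax x le_rfl)⟩
    · rintro ⟨N, hN⟩
      obtain ⟨n, -, hn⟩ := exists_birkhoffSum_eq_birkhoffMax (T := T) (f := f) N x
      exact ⟨n, hn ▸ hN⟩
  rw [hU]
  refine ge_of_tendsto' (tendsto_setIntegral_of_monotone
    (fun N => measurableSet_lt measurable_const (measurable_birkhoffMax hT.measurable hfm N))
    (monotone_nat_of_le_succ fun N x hx => hx.trans_le (birkhoffMax_le_succ N x))
    hf.integrableOn) (hT.setIntegral_birkhoffMax_pos_nonneg hfm hf)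

end MeasureTheory.MeasurePreserving

end BirkhoffMax

theorem frequently_atTop_succ_iff {P : ℕ → Prop} :
    (∃ᶠ n in atTop, P (n + 1)) ↔ ∃ᶠ n in atTop, P n := by
  conv_rhs => rw [← map_add_atTop_eq_nat 1]
  rw [frequently_map]

theorem frequently_mul_add_le_of_lt {s : ℕ → ℝ} {p p' : ℝ} (hp : p < p') (C : ℝ)
    (h : ∃ᶠ n in atTop, p' * n ≤ s n) : ∃ᶠ n in atTop, p * n + C ≤ s n := by
  have hlarge : ∀ᶠ n : ℕ in atTop, C ≤ (p' - p) * n :=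
    (tendsto_natCast_atTop_atTop.const_mul_atTop (sub_pos.2 hp)).eventually_ge_atTop _
  exact (h.and_eventually hlarge).mono fun n ⟨h₁, h₂⟩ => by linarith

/-- `q ≤ limsup (s n / n)`, with rational slopes so that it defines measurable sets. -/
def LeUpperRate (q : ℝ) (s : ℕ → ℝ) : Prop :=
  ∀ p : ℚ, (p : ℝ) < q → ∃ᶠ n in atTop, (p : ℝ) * n ≤ s n

theorem leUpperRate_iff_of_succ {q c : ℝ} {s t : ℕ → ℝ} (h : ∀ n, t (n + 1) = c + s n) :
    LeUpperRate q t ↔ LeUpperRate q s := by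
  refine ⟨fun ht p hp => ?_, fun hs p hp => ?_⟩ <;> obtain ⟨p', hpp', hp'q⟩ := exists_rat_btwn hp
  · refine (frequently_mul_add_le_of_lt (s := fun n => c + s n - p') hpp' (c - p')
      ((frequently_atTop_succ_iff.2 (ht p' hp'q)).mono fun n hn => ?_)).mono fun n hn => ?_
    · push_cast at hn
      rw [h] at hn
      linarith
    · linarith
  · refine frequently_atTop_succ_iff.1 <|
      (frequently_mul_add_le_of_lt hpp' (p - c) (hs p' hp'q)).mono fun n hn => ?_
    push_cast
    rw [h]
    linarith

section Ergodic

variable {α : Type*} [MeasurableSpace α] {μ : Measure α} [IsProbabilityMeasure μ] {T : α → α}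
  {g : α → ℝ}

theorem measurableSet_leUpperRate (q : ℝ) (hT : Measurable T) (hg : Measurable g) :
    MeasurableSet {x | LeUpperRate q (fun n => birkhoffSum T g n x)} := by
  simp only [LeUpperRate, Set.ofPred_forall, frequently_atTop, Set.ofPred_exists, Set.ofPred_and]
  exact .iInter fun p => .iInter fun _ => .iInter fun N => .iUnion fun n =>
    (MeasurableSet.const _).inter
      (measurableSet_le measurable_const (measurable_birkhoffSum hT hg n))

theorem Ergodic.ae_eventually_birkhoffSum_lt (hT : Ergodic T μ) (hgm : Measurable g)
    (hg : Integrable g μ) {q : ℝ} (hq : ∫ x, g x ∂μ < q) :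
    ∀ᵐ x ∂μ, ∀ᶠ n in atTop, birkhoffSum T g n x < q * n := by
  obtain ⟨r, hgr, hrq⟩ := exists_between hq
  set D := {x | LeUpperRate q (fun n => birkhoffSum T g n x)}
  have hDinv : T ⁻¹' D = D :=
    Set.ext fun x => (leUpperRate_iff_of_succ fun n => birkhoffSum_succ' T g n x).symm
  have hDA : D ⊆ {x | ∃ n, 0 < birkhoffSum T (fun y => g y - r) n x} := by
    intro x hx
    obtain ⟨p, hrp, hpq⟩ := exists_rat_btwn hrq
    obtain ⟨n, hn⟩ := (frequently_mul_add_le_of_lt hrp 1 (hx p hpq)).exists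
    have hsub : birkhoffSum T (fun y => g y - r) n x = birkhoffSum T g n x - r * n := by
      simp [birkhoffSum, sum_sub_distrib, mul_comm]
    exact ⟨n, by linarith⟩
  have hD : μ D = 0 := by
    refine (hT.measure_self_or_compl_eq_zero
      (measurableSet_leUpperRate q hT.measurable hgm) hDinv).resolve_right fun hDc => ?_
    have hmax := hT.toMeasurePreserving.setIntegral_setOf_exists_birkhoffSum_pos_nonneg
      (f := fun y => g y - r) (hgm.sub measurable_const) (hg.sub (integrable_const r))
    have hA : ∀ᵐ x ∂μ, x ∈ {x | ∃ n, 0 < birkhoffSum T (fun y => g y - r) n x} :=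
      mem_of_superset (mem_ae_iff.2 hDc) hDA
    rw [Measure.restrict_eq_self_of_ae_mem hA,
      integral_sub hg (integrable_const r)] at hmax
    simp only [integral_const, probReal_univ, smul_eq_mul, one_mul, sub_nonneg] at hmax
    linarith
  filter_upwards [measure_eq_zero_iff_ae_notMem.1 hD] with x hx
  simp only [D, Set.mem_ofPred_eq, LeUpperRate, not_forall, not_frequently, not_le] at hx
  obtain ⟨p, hpq, hp⟩ := hx
  exact hp.mono fun n hn => hn.trans_le (mul_le_mul_of_nonneg_right hpq.le n.cast_nonneg)

end Ergodic

theorem card_le_birkhoffSum_indicator {α : Type*} {T : α → α} {s : Set α} {K : Finset ℕ}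
    {n : ℕ} {x : α} (hK : K ⊆ range n) (hs : ∀ k ∈ K, T^[k] x ∈ s) :
    (#K : ℝ) ≤ birkhoffSum T (s.indicator 1) n x :=
  calc (#K : ℝ) = ∑ k ∈ K, s.indicator 1 (T^[k] x) := by
        rw [sum_congr rfl fun k hk => Set.indicator_of_mem (hs k hk) 1]
        simp
    _ ≤ _ := sum_le_sum_of_subset_of_nonneg hK fun _ _ _ =>
        Set.indicator_nonneg (fun _ _ => zero_le_one) _

theorem Equiv.Perm.zpow_neg_natCast_apply {α : Type*} (θ : Equiv.Perm α) (k : ℕ) (x : α) :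
    (θ ^ (-(k : ℤ))) x = θ.symm^[k] x := by
  rw [zpow_neg, zpow_natCast, ← inv_pow, Equiv.Perm.iterate_eq_pow, Equiv.Perm.inv_def]

theorem sub_add_one_le_birkhoffSum_of_block {α : Type*} (θ : Equiv.Perm α) {s : Set α}
    {x : α} {N : ℕ} {a c : ℤ} (ha : -(N : ℤ) ≤ a) (hc : c ≤ 0)
    (hs : ∀ n, a ≤ n → n ≤ c → (θ ^ n) x ∈ s) :
    (c : ℝ) - a + 1 ≤ birkhoffSum θ.symm (s.indicator 1) (N + 1) x := by
  set K := (Icc a c).image fun n => (-n).toNat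
  have hK : c - a + 1 ≤ (#K : ℤ) := by
    rw [card_image_of_injOn fun n hn m hm h => by
      simp only [coe_Icc, Set.mem_Icc] at hn hm h
      omega, Int.card_Icc]
    omega
  calc (c : ℝ) - a + 1 ≤ #K := by exact_mod_cast hK
    _ ≤ _ := by
      refine card_le_birkhoffSum_indicator (fun k hk => ?_) (fun k hk => ?_) <;>
        obtain ⟨n, hn, rfl⟩ := mem_image.1 hk <;> rw [mem_Icc] at hn
      · rw [mem_range]
        omega
      · rw [← Equiv.Perm.zpow_neg_natCast_apply, Int.toNat_of_nonneg (by omega), neg_neg]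
        exact hs n hn.1 hn.2

/-- for an invertible ergodic measure-preserving transformation θ and a
set E with P(E) > 1 − α, almost surely every block of at least βN consecutive integers
in [−N, 0] (N large) contains a visit time to E. -/
theorem statement12 {Ω : Type*} [MeasurableSpace Ω] (P : Measure Ω)
    [IsProbabilityMeasure P] (θ : Equiv.Perm Ω)
    (hθ : Measurable θ) (hθ' : Measurable θ.symm) (herg : Ergodic (⇑θ) P)
    (E : Set Ω) (hE : MeasurableSet E)
    (α : ℝ) (hα : α ∈ Set.Ioo (0 : ℝ) 1) (hPE : ENNReal.ofReal (1 - α) < P E) :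
    ∀ β : ℝ, α < β → β < 1 →
      ∀ᵐ ω ∂P, ∃ N₀ : ℕ, ∀ N : ℕ, N₀ ≤ N →
        ∀ a c : ℤ, -(N : ℤ) ≤ a → c ≤ 0 → β * (N : ℝ) ≤ (c : ℝ) - (a : ℝ) + 1 →
          ∃ n : ℤ, a ≤ n ∧ n ≤ c ∧ (θ ^ n) ω ∈ E := by
  intro β hαβ _
  have hmean : ∫ ω, Eᶜ.indicator 1 ω ∂P < α := by
    have h := (ENNReal.ofReal_lt_iff_lt_toReal (sub_nonneg.2 hα.2.le) (measure_ne_top P E)).1 hPE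
    rw [integral_indicator_one hE.compl, measureReal_compl hE, probReal_univ]
    exact sub_lt_comm.1 h
  have hT : Ergodic θ.symm P := Ergodic.symm (e := ⟨θ, hθ, hθ'⟩) herg
  have hrate := hT.ae_eventually_birkhoffSum_lt (g := Eᶜ.indicator 1)
    (measurable_const.indicator hE.compl) ((integrable_const 1).indicator hE.compl) hmean
  filter_upwards [hrate] with ω hω
  have hlarge : ∀ᶠ N : ℕ in atTop, α * (N + 1) ≤ β * N :=
    (tendsto_natCast_atTop_atTop.const_mul_atTop (sub_pos.2 hαβ)).eventually_ge_atTop α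
      |>.mono fun N hN => by linarith
  obtain ⟨N₀, hN₀⟩ := eventually_atTop.1
    (((tendsto_add_atTop_nat 1).eventually hω).and hlarge)
  refine ⟨N₀, fun N hN a c ha hc hlen => ?_⟩
  by_contra! hmissed
  have hcount := sub_add_one_le_birkhoffSum_of_block θ (s := Eᶜ) ha hc hmissed
  have hN := hN₀ N hN
  push_cast at hN
  linarith
end
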